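/- Let η¹ and η² be differential functions depending only on t, x and the jet variables r¹_κ, r²_κ, and let η³ be a differential function of r, such that (η¹, η², η³) satisfies identically the determining equations for generalized symmetries of the system (S): 𝒟_t η¹ + V¹ 𝒟_x η¹ + r¹_1(η¹+η²) = 0, 𝒟_t η² + V² 𝒟_x η² + r²_1(η¹+η²) = 0, 𝒟_t η³ + V³ 𝒟_x η³ + r³_1(η¹+η²) = 0. Then there exists a differential function η̂³ depending only on t, x and the jet variables r¹_κ, r²_κ such that 𝒟_t η̂³ + (r¹_0 + r²_0) 𝒟_x η̂³ + e^{r¹_0 − r²_0}(η¹ + η²) = 0 identically; consequently the triple (η¹, η², e^{r²_0 − r¹_0} r³_1 η̂³) also satisfies the determining equations. -/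

import Mathlib

/- STATEMENT 10 (Lemma 4 of the paper): every generalized symmetry of (S)
whose first two components depend only on t, x, r¹_κ, r²_κ is equivalent to
one whose third component has the form e^{r²−r¹} r³_1 η̂³ with
η̂³ = η̂³[r¹,r²] satisfying 𝒟_t η̂³ + (r¹+r²)𝒟_x η̂³ + e^{r¹−r²}(η¹+η²) = 0. -/

noncomputable section

namespace IDFM

/-- The infinite jet space with coordinates t, x and r^i_κ (i ranging over
`Fin 3`, κ ∈ ℕ): `p.2.2 i κ` represents ∂^κ r^{i+1}/∂x^κ. -/
abbrev Jet : Type := ℝ × ℝ × (Fin 3 → ℕ → ℝ)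

/-- Directional (Gateaux) derivative of a function on jet space. -/
def gd (f : Jet → ℝ) (p v : Jet) : ℝ := deriv (fun s : ℝ => f (p + s • v)) 0

/-- The restricted total derivative operator
𝒟_x = ∂_x + Σ_{κ,i} r^i_{κ+1} ∂_{r^i_κ}. -/
def Dx (f : Jet → ℝ) (p : Jet) : ℝ :=
  gd f p (0, 1, fun i κ => p.2.2 i (κ + 1))

/-- The characteristic speeds V¹ = r¹+r²+1, V² = r¹+r²−1, V³ = r¹+r². -/
def V (i : Fin 3) (p : Jet) : ℝ :=
  p.2.2 0 0 + p.2.2 1 0 + if i = 0 then 1 else if i = 1 then -1 else 0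

/-- The restricted total derivative operator
𝒟_t = ∂_t − Σ_{κ,i} 𝒟_x^κ(V^i r^i_1) ∂_{r^i_κ}. -/
def Dt (f : Jet → ℝ) (p : Jet) : ℝ :=
  gd f p (1, 0, fun i κ => -(Dx^[κ] (fun q => V i q * q.2.2 i 1) p))

/-- `f` is a smooth differential function of `r` of order at most `n`. -/
def IsDiffFun (n : ℕ) (f : Jet → ℝ) : Prop :=
  ∃ F : ℝ × ℝ × (Fin 3 → Fin (n + 1) → ℝ) → ℝ,
    ContDiff ℝ (⊤ : ℕ∞) F ∧ ∀ p : Jet, f p = F (p.1, p.2.1, fun i κ => p.2.2 i κ.1)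

/-- `f` is a smooth differential function of `(r¹, r²)` of order at most `n`,
i.e., it depends only on t, x and the jet variables r¹_κ, r²_κ, 0 ≤ κ ≤ n. -/
def IsDiffFun12 (n : ℕ) (f : Jet → ℝ) : Prop :=
  ∃ F : ℝ × ℝ × (Fin 2 → Fin (n + 1) → ℝ) → ℝ,
    ContDiff ℝ (⊤ : ℕ∞) F ∧
    ∀ p : Jet, f p = F (p.1, p.2.1, fun i κ => p.2.2 (Fin.castLE (by omega) i) κ.1)

-- aux
abbrev JF (N : ℕ) : Type := ℝ × ℝ × (Fin 3 → Fin (N+1) → ℝ)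
def pr (N : ℕ) (p : Jet) : JF N := (p.1, p.2.1, fun i κ => p.2.2 i κ.1)
def Xv (p : Jet) : Jet := (0, 1, fun i κ => p.2.2 i (κ + 1))
def Vr (i : Fin 3) (q : Jet) : ℝ := V i q * q.2.2 i 1
def Tv (p : Jet) : Jet := (1, 0, fun i κ => -(Dx^[κ] (Vr i) p))

example (f : Jet → ℝ) (p : Jet) : Dx f p = gd f p (Xv p) := rfl
example (f : Jet → ℝ) (p : Jet) : Dt f p = gd f p (Tv p) := rfl

lemma pr_add_smul (N : ℕ) (p v : Jet) (s : ℝ) :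
    pr N (p + s • v) = pr N p + s • pr N v := rfl

lemma smul_eq_mul' (s x : ℝ) : s • x = s * x := rfl

def Rep (N : ℕ) (f : Jet → ℝ) (F : JF N → ℝ) : Prop :=
  ContDiff ℝ (⊤ : ℕ∞) F ∧ ∀ p, f p = F (pr N p)

lemma p_zero_smul (p v : Jet) : p + (0:ℝ) • v = p := by simp
lemma p_zero_smul' {N : ℕ} (p v : JF N) : p + (0:ℝ) • v = p := by simp

lemma Rep.hasDerivAt {N : ℕ} {f : Jet → ℝ} {F : JF N → ℝ} (h : Rep N f F) (p v : Jet) :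
    HasDerivAt (fun s : ℝ => f (p + s • v)) (fderiv ℝ F (pr N p) (pr N v)) 0 := by
  have h0 : (fun s : ℝ => f (p + s • v)) = fun s => F (pr N p + s • pr N v) := by
    funext s; rw [h.2, pr_add_smul]
  rw [h0]
  have hline : HasDerivAt (fun s : ℝ => pr N p + s • pr N v) (pr N v) 0 := by
    simpa using ((hasDerivAt_id (0:ℝ)).smul_const (pr N v)).const_add (pr N p)
  have hF : HasFDerivAt F (fderiv ℝ F (pr N p)) (pr N p) :=
    ((h.1.differentiable (by simp)) (pr N p)).hasFDerivAt
  have hF' : HasFDerivAt F (fderiv ℝ F (pr N p)) (pr N p + (0:ℝ) • pr N v) := by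
    rw [p_zero_smul']; exact hF
  simpa [Function.comp_def] using hF'.comp_hasDerivAt 0 hline

lemma Rep.gd_eq {N : ℕ} {f : Jet → ℝ} {F : JF N → ℝ} (h : Rep N f F) (p v : Jet) :
    gd f p v = fderiv ℝ F (pr N p) (pr N v) := (h.hasDerivAt p v).deriv

lemma Rep.hasDerivAt_gd {N : ℕ} {f : Jet → ℝ} {F : JF N → ℝ} (h : Rep N f F) (p v : Jet) :
    HasDerivAt (fun s : ℝ => f (p + s • v)) (gd f p v) 0 := by
  rw [h.gd_eq p v]; exact h.hasDerivAt p v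


section Finite
lemma contDiff_coord {N : ℕ} (i : Fin 3) (κ : Fin (N+1)) :
    ContDiff ℝ (⊤ : ℕ∞) (fun y : JF N => y.2.2 i κ) := by fun_prop

def tr {M N : ℕ} (h : N ≤ M) (q : JF M) : JF N :=
  (q.1, q.2.1, fun i κ => q.2.2 i (Fin.castLE (by omega) κ))

lemma contDiff_tr {M N : ℕ} (h : N ≤ M) : ContDiff ℝ (⊤ : ℕ∞) (tr h) := by
  unfold tr; fun_prop

def XvF (N : ℕ) (q : JF (N+1)) : JF N := (0, 1, fun i κ => q.2.2 i κ.succ)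

lemma contDiff_XvF (N : ℕ) : ContDiff ℝ (⊤ : ℕ∞) (XvF N) := by unfold XvF; fun_prop

def DXF {N : ℕ} (F : JF N → ℝ) (q : JF (N+1)) : ℝ :=
  fderiv ℝ F (tr (by omega) q) (XvF N q)

lemma contDiff_DXF {N : ℕ} {F : JF N → ℝ} (hF : ContDiff ℝ (⊤ : ℕ∞) F) :
    ContDiff ℝ (⊤ : ℕ∞) (DXF F) :=
  ((hF.fderiv_right (by simp)).comp (contDiff_tr _)).clm_apply (contDiff_XvF N)

lemma tr_pr {M N : ℕ} (h : N ≤ M) (p : Jet) : tr h (pr M p) = pr N p := rfl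

lemma XvF_pr (N : ℕ) (p : Jet) : XvF N (pr (N+1) p) = pr N (Xv p) := rfl

lemma Rep.mono {N M : ℕ} (h : N ≤ M) {f : Jet → ℝ} {F : JF N → ℝ} (hf : Rep N f F) :
    Rep M f (F ∘ tr h) :=
  ⟨hf.1.comp (contDiff_tr h), fun p => by simp [Function.comp, tr_pr, hf.2 p]⟩

lemma Rep.dx {N : ℕ} {f : Jet → ℝ} {F : JF N → ℝ} (h : Rep N f F) :
    Rep (N+1) (Dx f) (DXF F) := by
  refine ⟨contDiff_DXF h.1, fun p => ?_⟩
  show gd f p (Xv p) = _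
  rw [h.gd_eq p (Xv p), DXF, tr_pr, XvF_pr]
end Finite

section CF
def VrF (i : Fin 3) (y : JF 1) : ℝ :=
  (y.2.2 0 0 + y.2.2 1 0 + if i = 0 then 1 else if i = 1 then -1 else 0) * y.2.2 i 1

def cf (i : Fin 3) : (k : ℕ) → JF (k+1) → ℝ
  | 0 => VrF i
  | (k+1) => DXF (cf i k)

lemma rep_cf (i : Fin 3) : ∀ k, Rep (k+1) (Dx^[k] (Vr i)) (cf i k)
  | 0 => by
      refine ⟨by show ContDiff ℝ (⊤ : ℕ∞) (VrF i); unfold VrF; fun_prop, fun p => ?_⟩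
      simp only [Function.iterate_zero, id_eq]
      rfl
  | (k+1) => by
      rw [Function.iterate_succ_apply']
      exact (rep_cf i k).dx

lemma Tv_eq (p : Jet) : pr 0 (Tv p) = pr 0 (Tv p) := rfl
end CF

section Helpers
lemma hasDerivAt_line {E : Type*} [NormedAddCommGroup E] [NormedSpace ℝ E] (a b : E) :
    HasDerivAt (fun s : ℝ => a + s • b) b 0 := by
  simpa using ((hasDerivAt_id (0:ℝ)).smul_const b).const_add a

lemma hasDerivAt_comp_line {E F' : Type*} [NormedAddCommGroup E] [NormedSpace ℝ E]
    [NormedAddCommGroup F'] [NormedSpace ℝ F'] {G : E → F'} (hG : ContDiff ℝ (⊤ : ℕ∞) G) (a b : E) :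
    HasDerivAt (fun s : ℝ => G (a + s • b)) (fderiv ℝ G a b) 0 := by
  have hF' : HasFDerivAt G (fderiv ℝ G a) (a + (0:ℝ) • b) := by
    simp only [zero_smul, add_zero]; exact ((hG.differentiable (by simp)) a).hasFDerivAt
  simpa [Function.comp_def] using hF'.comp_hasDerivAt 0 (hasDerivAt_line a b)

def Sh (q : Jet) : Jet := (0, 0, fun i κ => q.2.2 i (κ + 1))

lemma Xv_line (p v : Jet) (s : ℝ) : Xv (p + s • v) = Xv p + s • Sh v := by
  refine Prod.ext ?_ (Prod.ext ?_ ?_)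
  · show (0:ℝ) = 0 + s • (0:ℝ); simp
  · show (1:ℝ) = 1 + s • (0:ℝ); simp
  · rfl
end Helpers

section Comm
lemma comm {N : ℕ} {f : Jet → ℝ} {F : JF N → ℝ} (h : Rep N f F) (p : Jet) :
    Dt (Dx f) p = Dx (Dt f) p := by
  have hf2 : ContDiff ℝ (⊤ : ℕ∞) (fderiv ℝ F) := h.1.fderiv_right (by simp)
  set P := pr N p with hP
  set XP := pr N (Xv p) with hXP
  set TP := pr N (Tv p) with hTP
  set W : JF N := pr N (Sh (Tv p)) with hW
  -- LHS
  have hL : Dt (Dx f) p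
      = fderiv ℝ (fderiv ℝ F) P TP XP + fderiv ℝ F P W := by
    show gd (Dx f) p (Tv p) = _
    have hi : (fun s : ℝ => Dx f (p + s • Tv p))
        = fun s : ℝ => (fderiv ℝ F (P + s • TP)) (XP + s • W) := by
      funext s
      have : Dx f (p + s • Tv p) = gd f (p + s • Tv p) (Xv (p + s • Tv p)) := rfl
      rw [this, h.gd_eq, Xv_line, pr_add_smul, pr_add_smul]
    have hc : HasDerivAt (fun s : ℝ => fderiv ℝ F (P + s • TP))
        (fderiv ℝ (fderiv ℝ F) P TP) 0 := hasDerivAt_comp_line hf2 P TP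
    have hu : HasDerivAt (fun s : ℝ => XP + s • W) W 0 := hasDerivAt_line XP W
    have := (hc.clm_apply hu).deriv
    rw [gd, hi, this]
    simp
  -- RHS
  have hR : Dx (Dt f) p
      = fderiv ℝ (fderiv ℝ F) P XP TP + fderiv ℝ F P W := by
    show gd (Dt f) p (Xv p) = _
    have hi : (fun s : ℝ => Dt f (p + s • Xv p))
        = fun s : ℝ => (fderiv ℝ F (P + s • XP)) (pr N (Tv (p + s • Xv p))) := by
      funext s
      have : Dt f (p + s • Xv p) = gd f (p + s • Xv p) (Tv (p + s • Xv p)) := rfl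
      rw [this, h.gd_eq, pr_add_smul]
    have hc : HasDerivAt (fun s : ℝ => fderiv ℝ F (P + s • XP))
        (fderiv ℝ (fderiv ℝ F) P XP) 0 := hasDerivAt_comp_line hf2 P XP
    have hu : HasDerivAt (fun s : ℝ => pr N (Tv (p + s • Xv p))) W 0 := by
      show HasDerivAt (fun s : ℝ =>
        ((1:ℝ), (0:ℝ), fun (i : Fin 3) (κ : Fin (N+1)) => -(Dx^[κ.1] (Vr i) (p + s • Xv p)))) W 0
      refine (hasDerivAt_const (0:ℝ) (1:ℝ)).prodMk ((hasDerivAt_const (0:ℝ) (0:ℝ)).prodMk ?_)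
      refine hasDerivAt_pi.mpr fun i => hasDerivAt_pi.mpr fun κ => ?_
      show HasDerivAt (fun s : ℝ => -(Dx^[κ.1] (Vr i) (p + s • Xv p)))
        (-(Dx^[κ.1 + 1] (Vr i) p)) 0
      have hval : Dx^[κ.1 + 1] (Vr i) p = gd (Dx^[κ.1] (Vr i)) p (Xv p) := by
        rw [Function.iterate_succ_apply']; rfl
      rw [hval]
      exact ((rep_cf i κ.1).hasDerivAt_gd p (Xv p)).neg
    have := (hc.clm_apply hu).deriv
    rw [gd, hi, this]
    have h0 : pr N (Tv (p + (0:ℝ) • Xv p)) = TP := by rw [p_zero_smul]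
    rw [h0]
    simp
  rw [hL, hR]
  have hsymm := second_derivative_symmetric
    (f' := fderiv ℝ F) (f'' := fderiv ℝ (fderiv ℝ F) P)
    (fun y => ((h.1.differentiable (by simp)) y).hasFDerivAt)
    (((hf2.differentiable (by simp)) P).hasFDerivAt) XP TP
  rw [hsymm]
end Comm

section Ind
def upd3 (p : Jet) (g : ℕ → ℝ) : Jet :=
  (p.1, p.2.1, fun i κ => if i = 2 then g κ else p.2.2 i κ)
def Ind3 (f : Jet → ℝ) : Prop := ∀ p g, f (upd3 p g) = f p
def upd30 (p : Jet) (c : ℝ) : Jet :=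
  (p.1, p.2.1, fun i κ => if i = 2 ∧ κ = 0 then c else p.2.2 i κ)
def Ind30 (f : Jet → ℝ) : Prop := ∀ p c, f (upd30 p c) = f p

lemma gd_congr_curve {f g : Jet → ℝ} {p v q w : Jet}
    (h : ∀ s : ℝ, f (p + s • v) = g (q + s • w)) : gd f p v = gd g q w := by
  unfold gd; rw [funext h]

lemma upd3_curve (p : Jet) (g : ℕ → ℝ) (s : ℝ) :
    upd3 p g + s • Xv (upd3 p g) = upd3 (p + s • Xv p) (fun κ => g κ + s * g (κ+1)) := by
  refine Prod.ext rfl (Prod.ext rfl ?_)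
  funext i κ
  by_cases hi : i = 2 <;>
    simp [upd3, Xv, hi, Prod.fst_add, Prod.snd_add, Pi.add_apply, Pi.smul_apply, smul_eq_mul]

lemma Ind3.dx {f : Jet → ℝ} (hf : Ind3 f) : Ind3 (Dx f) := by
  intro p g
  show gd f (upd3 p g) (Xv (upd3 p g)) = gd f p (Xv p)
  apply gd_congr_curve
  intro s; rw [upd3_curve, hf]

lemma Ind3.iter {f : Jet → ℝ} (hf : Ind3 f) : ∀ k, Ind3 (Dx^[k] f)
  | 0 => hf
  | (k+1) => by rw [Function.iterate_succ_apply']; exact (hf.iter k).dx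

lemma ind3_Vr (i : Fin 3) (hi : i ≠ 2) : Ind3 (Vr i) := by
  intro p g
  simp [Vr, V, upd3, hi]

lemma Xv_upd30 (p : Jet) (c : ℝ) : Xv (upd30 p c) = Xv p := by
  refine Prod.ext rfl (Prod.ext rfl ?_)
  funext i κ
  simp [Xv, upd30]

lemma upd30_curve (p : Jet) (c : ℝ) (s : ℝ) :
    upd30 p c + s • Xv p = upd30 (p + s • Xv p) (c + s * p.2.2 2 1) := by
  refine Prod.ext rfl (Prod.ext rfl ?_)
  funext i κ
  by_cases hi : i = 2
  · subst hi
    cases κ with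
    | zero => simp [upd30, Xv]
    | succ κ => simp [upd30, Xv]
  · simp [upd30, Xv, hi]

lemma Ind30.dx {f : Jet → ℝ} (hf : Ind30 f) : Ind30 (Dx f) := by
  intro p c
  show gd f (upd30 p c) (Xv (upd30 p c)) = gd f p (Xv p)
  apply gd_congr_curve
  intro s; rw [Xv_upd30, upd30_curve, hf]

lemma Ind30.iter {f : Jet → ℝ} (hf : Ind30 f) : ∀ k, Ind30 (Dx^[k] f)
  | 0 => hf
  | (k+1) => by rw [Function.iterate_succ_apply']; exact (hf.iter k).dx

lemma ind30_Vr2 : Ind30 (Vr 2) := by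
  intro p c
  simp [Vr, V, upd30]
end Ind

section Kill
def sec (N : ℕ) (y : JF N) : Jet :=
  (y.1, y.2.1, fun i κ => if h : κ < N+1 then y.2.2 i ⟨κ, h⟩ else 0)

lemma pr_sec (N : ℕ) (y : JF N) : pr N (sec N y) = y := by
  refine Prod.ext rfl (Prod.ext rfl ?_)
  funext i κ
  simp [pr, sec, κ.isLt, not_lt.mpr (Nat.lt_succ_iff.mp κ.isLt)]

def e20 (N : ℕ) : JF N := (0, 0, fun i κ => if i = 2 ∧ κ.1 = 0 then 1 else 0)

lemma sec_e20 (N : ℕ) (y : JF N) (s : ℝ) :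
    sec N (y + s • e20 N) = upd30 (sec N y) (y.2.2 2 ⟨0, by omega⟩ + s) := by
  refine Prod.ext (by simp [sec, upd30, e20]) (Prod.ext (by simp [sec, upd30, e20]) ?_)
  funext i κ
  by_cases hi : i = 2
  · subst hi
    cases κ with
    | zero => simp [sec, upd30, e20]
    | succ κ =>
      by_cases hκ : κ + 1 < N + 1
      · simp [sec, upd30, e20, hκ]
      · simp [sec, upd30, e20, hκ]
  · simp [sec, upd30, e20, hi]

lemma fderiv_e20 {N : ℕ} {f : Jet → ℝ} {F : JF N → ℝ} (h : Rep N f F) (h30 : Ind30 f)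
    (y : JF N) : fderiv ℝ F y (e20 N) = 0 := by
  have hcurve : (fun s : ℝ => F (y + s • e20 N)) = fun _ => F y := by
    funext s
    have h1 : F (y + s • e20 N) = f (sec N (y + s • e20 N)) := by rw [h.2, pr_sec]
    have h2 : F y = f (sec N y) := by rw [h.2, pr_sec]
    rw [h1, h2, sec_e20, h30]
  have hd := hasDerivAt_comp_line h.1 y (e20 N)
  rw [hcurve] at hd
  exact (hd.unique (hasDerivAt_const 0 (F y))).symm ▸ rfl

lemma fderiv_add_e20 {N : ℕ} {f : Jet → ℝ} {F : JF N → ℝ} (h : Rep N f F) (h30 : Ind30 f)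
    (y u : JF N) (d : ℝ) : fderiv ℝ F y (u + d • e20 N) = fderiv ℝ F y u := by
  rw [map_add, map_smul, fderiv_e20 h h30, smul_zero, add_zero]
end Kill

section Phi
def Efun (q : Jet) : ℝ := Real.exp (q.2.2 0 0 - q.2.2 1 0)
def SE (q : Jet) : ℝ := (q.2.2 0 0 + q.2.2 1 0) * Efun q

def phi : ℕ → Jet → ℝ
  | 0 => fun _ => 0
  | (k+1) => Dx^[k] Efun

def sg (p : Jet) : Jet := (p.1, p.2.1, fun i κ => if i = 2 then phi κ p else p.2.2 i κ)

lemma sg_eq_upd3 (p : Jet) : sg p = upd3 p (fun κ => phi κ p) := rfl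

def Ecf : (k : ℕ) → JF k → ℝ
  | 0 => fun y => Real.exp (y.2.2 0 0 - y.2.2 1 0)
  | (k+1) => DXF (Ecf k)

lemma rep_Ecf : ∀ k, Rep k (Dx^[k] Efun) (Ecf k)
  | 0 => ⟨by show ContDiff ℝ (⊤ : ℕ∞) fun y : JF 0 => Real.exp (y.2.2 0 0 - y.2.2 1 0); fun_prop,
      fun p => rfl⟩
  | (k+1) => by
      rw [Function.iterate_succ_apply']
      exact (rep_Ecf k).dx

lemma phi_rep : ∀ k, ∃ F : JF k → ℝ, Rep k (phi k) F
  | 0 => ⟨fun _ => 0, contDiff_const, fun _ => rfl⟩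
  | (k+1) => ⟨_, (rep_Ecf k).mono (by omega)⟩

lemma phi_hasDerivAt (k : ℕ) (p v : Jet) :
    HasDerivAt (fun s : ℝ => phi k (p + s • v)) (gd (phi k) p v) 0 := by
  obtain ⟨F, hF⟩ := phi_rep k
  exact hF.hasDerivAt_gd p v

lemma ind3_Efun : Ind3 Efun := fun p g => by simp [Efun, upd3]
lemma ind3_phi (k : ℕ) : Ind3 (phi k) := by
  cases k with
  | zero => intro p g; rfl
  | succ k => exact ind3_Efun.iter k

lemma sg_upd3 (p : Jet) (g : ℕ → ℝ) : sg (upd3 p g) = sg p := by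
  refine Prod.ext rfl (Prod.ext rfl ?_)
  funext i κ
  by_cases hi : i = 2
  · simp [sg, hi, ind3_phi κ p g]
  · simp [sg, upd3, hi]

lemma gd_comp_sg {N : ℕ} {g : Jet → ℝ} {G : JF N → ℝ} (hg : Rep N g G) (p v : Jet) :
    gd (fun q => g (sg q)) p v
      = fderiv ℝ G (pr N (sg p))
          ((v.1, v.2.1,
            fun i κ => if i = 2 then gd (phi κ.1) p v else v.2.2 i κ.1) : JF N) := by
  have hc : HasDerivAt (fun s : ℝ => pr N (sg (p + s • v)))
      ((v.1, v.2.1,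
        fun i κ => if i = 2 then gd (phi κ.1) p v else v.2.2 i κ.1) : JF N) 0 := by
    show HasDerivAt (fun s : ℝ =>
        (((p + s • v).1 : ℝ), ((p + s • v).2.1 : ℝ),
          fun (i : Fin 3) (κ : Fin (N+1)) =>
            if i = 2 then phi κ.1 (p + s • v) else (p + s • v).2.2 i κ.1)) _ 0
    refine HasDerivAt.prodMk ?_ (HasDerivAt.prodMk ?_ ?_)
    · exact hasDerivAt_line p.1 v.1
    · exact hasDerivAt_line p.2.1 v.2.1
    · refine hasDerivAt_pi.mpr fun i => hasDerivAt_pi.mpr fun κ => ?_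
      by_cases hi : i = 2
      · simp only [hi, if_pos rfl]
        exact phi_hasDerivAt κ.1 p v
      · simp only [hi, if_neg hi]
        exact hasDerivAt_line (p.2.2 i κ.1) (v.2.2 i κ.1)
  have hi2 : (fun s : ℝ => g (sg (p + s • v))) = fun s => G (pr N (sg (p + s • v))) := by
    funext s; rw [hg.2]
  have hF' : HasFDerivAt G (fderiv ℝ G (pr N (sg p))) (pr N (sg (p + (0:ℝ) • v))) := by
    rw [p_zero_smul]; exact ((hg.1.differentiable (by simp)) _).hasFDerivAt
  have := (hF'.comp_hasDerivAt 0 hc).deriv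
  rw [gd, hi2]
  simpa [Function.comp_def] using this

lemma gd_phi_Xv (k : ℕ) (p : Jet) : gd (phi k) p (Xv p) = Dx (phi k) p := rfl

lemma dx_phi_succ (k : ℕ) (p : Jet) : Dx (phi (k+1)) p = phi (k+2) p := by
  show Dx (Dx^[k] Efun) p = Dx^[k+1] Efun p
  rw [Function.iterate_succ_apply']

lemma gd_const (c : ℝ) (p v : Jet) : gd (fun _ => c) p v = 0 := by
  simp [gd]

lemma dx_const (c : ℝ) (p : Jet) : Dx (fun _ => c) p = 0 := gd_const c p _
lemma dx_phi_zero (p : Jet) : Dx (phi 0) p = 0 := gd_const 0 p _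

lemma dx_sg {N : ℕ} {g : Jet → ℝ} {G : JF N → ℝ} (hg : Rep N g G) (h30 : Ind30 g)
    (p : Jet) : Dx g (sg p) = Dx (fun q => g (sg q)) p := by
  have hR : Dx (fun q => g (sg q)) p
      = fderiv ℝ G (pr N (sg p))
          (((Xv p).1, (Xv p).2.1,
            fun i κ => if i = 2 then gd (phi κ.1) p (Xv p) else (Xv p).2.2 i κ.1) : JF N) :=
    gd_comp_sg hg p (Xv p)
  have hL : Dx g (sg p) = fderiv ℝ G (pr N (sg p)) (pr N (Xv (sg p))) :=
    hg.gd_eq (sg p) (Xv (sg p))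
  rw [hL, hR]
  have hvec : pr N (Xv (sg p))
      = (((Xv p).1, (Xv p).2.1,
          fun i κ => if i = 2 then gd (phi κ.1) p (Xv p) else (Xv p).2.2 i κ.1) : JF N)
        + (Efun p) • e20 N := by
    refine Prod.ext (by show (0:ℝ) = 0 + Efun p * 0; ring)
      (Prod.ext (by show (1:ℝ) = 1 + Efun p * 0; ring) ?_)
    funext i κ
    obtain ⟨kv, hκ⟩ := κ
    show (sg p).2.2 i (kv + 1)
        = (if i = 2 then gd (phi kv) p (Xv p) else (Xv p).2.2 i kv)
          + Efun p * (if i = 2 ∧ kv = 0 then 1 else 0)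
    by_cases hi : i = 2
    · subst hi
      simp only [sg, if_pos rfl, gd_phi_Xv, true_and]
      cases kv with
      | zero => simp [phi, dx_const]
      | succ k => simp [dx_phi_succ]
    · simp [sg, hi, Xv]
  rw [hvec, fderiv_add_e20 hg h30]
end Phi

section KL
lemma V0_eq (p : Jet) : V 0 p = p.2.2 0 0 + p.2.2 1 0 + 1 := by norm_num [V]
lemma V1_eq (p : Jet) : V 1 p = p.2.2 0 0 + p.2.2 1 0 + -1 := by norm_num [V]
lemma V2_eq (p : Jet) : V 2 p = p.2.2 0 0 + p.2.2 1 0 := by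
  have : (if (2:Fin 3) = 0 then (1:ℝ) else if (2:Fin 3) = 1 then -1 else 0) = 0 := by
    rw [if_neg (by decide), if_neg (by decide)]
  rw [V, this, add_zero]

lemma dt_Efun (p : Jet) :
    Dt Efun p = Efun p * ((-(V 0 p * p.2.2 0 1)) - (-(V 1 p * p.2.2 1 1))) := by
  show gd Efun p (Tv p) = _
  set A : ℝ := -(V 0 p * p.2.2 0 1) with hA
  set B : ℝ := -(V 1 p * p.2.2 1 1) with hB
  have h1 : HasDerivAt (fun s : ℝ => (p.2.2 0 0 + s • A) - (p.2.2 1 0 + s • B)) (A - B) 0 :=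
    (hasDerivAt_line (p.2.2 0 0) A).sub (hasDerivAt_line (p.2.2 1 0) B)
  have h2 := h1.exp
  have he : (fun s : ℝ => Efun (p + s • Tv p))
      = fun s : ℝ => Real.exp ((p.2.2 0 0 + s • A) - (p.2.2 1 0 + s • B)) := rfl
  rw [gd, he, h2.deriv]
  simp [Efun]

lemma dx_SE (p : Jet) :
    Dx SE p = (p.2.2 0 1 + p.2.2 1 1) * Efun p
      + (p.2.2 0 0 + p.2.2 1 0) * (Efun p * (p.2.2 0 1 - p.2.2 1 1)) := by
  show gd SE p (Xv p) = _
  set a : ℝ := p.2.2 0 1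
  set b : ℝ := p.2.2 1 1
  have h1 : HasDerivAt (fun s : ℝ => (p.2.2 0 0 + s • a) + (p.2.2 1 0 + s • b)) (a + b) 0 :=
    (hasDerivAt_line (p.2.2 0 0) a).add (hasDerivAt_line (p.2.2 1 0) b)
  have h2 : HasDerivAt (fun s : ℝ => Real.exp ((p.2.2 0 0 + s • a) - (p.2.2 1 0 + s • b)))
      (Real.exp ((p.2.2 0 0 + (0:ℝ) • a) - (p.2.2 1 0 + (0:ℝ) • b)) * (a - b)) 0 :=
    ((hasDerivAt_line (p.2.2 0 0) a).sub (hasDerivAt_line (p.2.2 1 0) b)).exp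
  have h3 := h1.mul h2
  simp only [Pi.mul_def] at h3
  have he : (fun s : ℝ => SE (p + s • Xv p))
      = fun s : ℝ => ((p.2.2 0 0 + s • a) + (p.2.2 1 0 + s • b))
          * Real.exp ((p.2.2 0 0 + s • a) - (p.2.2 1 0 + s • b)) := rfl
  rw [gd, he, h3.deriv]
  simp only [zero_smul, add_zero, smul_eq_mul, zero_mul, Efun]

lemma gd_neg {g : Jet → ℝ} (p v : Jet) : gd (fun q => -(g q)) p v = -(gd g p v) := by
  unfold gd
  exact deriv.neg

lemma KL' : ∀ j, ∀ p : Jet, Dt (Dx^[j] Efun) p = -(Dx^[j+1] SE p)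
  | 0 => by
      intro p
      show Dt Efun p = _
      rw [dt_Efun, Function.iterate_one, dx_SE, V0_eq, V1_eq]
      ring
  | (j+1) => by
      intro p
      have hstep : Dx^[j+1] Efun = Dx (Dx^[j] Efun) := Function.iterate_succ_apply' Dx j Efun
      rw [hstep, comm (rep_Ecf j) p]
      have hIH : Dt (Dx^[j] Efun) = fun q => -(Dx^[j+1] SE q) := funext (KL' j)
      rw [hIH]
      show gd (fun q => -(Dx^[j+1] SE q)) p (Xv p) = _
      rw [gd_neg]
      show -(Dx (Dx^[j+1] SE) p) = _
      rw [← Function.iterate_succ_apply' Dx (j+1) SE]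

lemma ind30_VrDx (k : ℕ) : Ind30 (Dx^[k] (Vr 2)) := ind30_Vr2.iter k

lemma KLsg : ∀ k, ∀ p : Jet, Dx^[k] (Vr 2) (sg p) = Dx^[k] SE p
  | 0 => by
      intro p
      show Vr 2 (sg p) = SE p
      have h1 : (sg p).2.2 2 1 = Efun p := by simp [sg, phi]
      have h2 : (sg p).2.2 0 0 = p.2.2 0 0 := by
        have : ((0:Fin 3) = 2) = False := by decide
        simp [sg, this]
      have h3 : (sg p).2.2 1 0 = p.2.2 1 0 := by
        have : ((1:Fin 3) = 2) = False := by decide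
        simp [sg, this]
      rw [Vr, V2_eq, h1, h2, h3, SE]
  | (k+1) => by
      intro p
      rw [Function.iterate_succ_apply']
      rw [dx_sg (rep_cf 2 k) (ind30_VrDx k) p]
      have hIH : (fun q => Dx^[k] (Vr 2) (sg q)) = Dx^[k] SE := funext (KLsg k)
      rw [hIH, ← Function.iterate_succ_apply' Dx k SE]
end KL

section Main
lemma ind3_of_12 {n : ℕ} {f : Jet → ℝ} (h : IsDiffFun12 n f) : Ind3 f := by
  obtain ⟨F, _, hval⟩ := h
  intro p g
  rw [hval, hval]
  congr 1
  refine Prod.ext rfl (Prod.ext rfl ?_)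
  funext i κ
  have hne : (Fin.castLE (by omega : (2:ℕ) ≤ 3) i) ≠ 2 := by
    intro hh
    have := congrArg Fin.val hh
    simp [Fin.castLE] at this
    omega
  simp [upd3, hne]

lemma sg_21 (p : Jet) : (sg p).2.2 2 1 = Efun p := by simp [sg, phi]
lemma sg_ne {i : Fin 3} (hi : i ≠ 2) (p : Jet) (κ : ℕ) : (sg p).2.2 i κ = p.2.2 i κ := by
  simp [sg, hi]
lemma ne02 : (0 : Fin 3) ≠ 2 := by decide
lemma ne12 : (1 : Fin 3) ≠ 2 := by decide
lemma V2_sg (p : Jet) : V 2 (sg p) = p.2.2 0 0 + p.2.2 1 0 := by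
  rw [V2_eq, sg_ne ne02, sg_ne ne12]

lemma main_eq1 {n m : ℕ} {η₁ η₂ η₃ : Jet → ℝ}
    (hη₁ : IsDiffFun12 n η₁) (hη₂ : IsDiffFun12 n η₂) (hη₃ : IsDiffFun m η₃)
    (hdet₃ : ∀ p : Jet,
      Dt η₃ p + V 2 p * Dx η₃ p + p.2.2 2 1 * (η₁ p + η₂ p) = 0) (p : Jet) :
    Dt (fun q => η₃ (sg q)) p
      + (p.2.2 0 0 + p.2.2 1 0) * Dx (fun q => η₃ (sg q)) p
      + Efun p * (η₁ p + η₂ p) = 0 := by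
  obtain ⟨F₃, hF₃s, hF₃v⟩ := hη₃
  have hrep : Rep m η₃ F₃ := ⟨hF₃s, fun q => hF₃v q⟩
  set S : ℝ := p.2.2 0 0 + p.2.2 1 0 with hS
  set wT : JF m := ((Tv p).1, (Tv p).2.1,
    fun i κ => if i = 2 then gd (phi κ.1) p (Tv p) else (Tv p).2.2 i κ.1) with hwT
  set wX : JF m := ((Xv p).1, (Xv p).2.1,
    fun i κ => if i = 2 then gd (phi κ.1) p (Xv p) else (Xv p).2.2 i κ.1) with hwX
  have hDt : Dt (fun q => η₃ (sg q)) p = fderiv ℝ F₃ (pr m (sg p)) wT :=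
    gd_comp_sg hrep p (Tv p)
  have hDx : Dx (fun q => η₃ (sg q)) p = fderiv ℝ F₃ (pr m (sg p)) wX :=
    gd_comp_sg hrep p (Xv p)
  have hvec : wT + S • wX = pr m (Tv (sg p)) + S • pr m (Xv (sg p)) := by
    refine Prod.ext rfl (Prod.ext rfl ?_)
    funext i κ
    obtain ⟨kv, hκ⟩ := κ
    show (if i = 2 then gd (phi kv) p (Tv p) else (Tv p).2.2 i kv)
        + S * (if i = 2 then gd (phi kv) p (Xv p) else (Xv p).2.2 i kv)
      = (Tv (sg p)).2.2 i kv + S * (sg p).2.2 i (kv + 1)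
    by_cases hi : i = 2
    · subst hi
      simp only [if_pos rfl]
      show gd (phi kv) p (Tv p) + S * gd (phi kv) p (Xv p)
        = -(Dx^[kv] (Vr 2) (sg p)) + S * (sg p).2.2 2 (kv + 1)
      have hsk : (sg p).2.2 2 (kv + 1) = phi (kv + 1) p := by simp [sg]
      rw [KLsg kv p, hsk]
      cases kv with
      | zero =>
          show gd (fun _ => (0:ℝ)) p (Tv p) + S * gd (fun _ => (0:ℝ)) p (Xv p)
            = -(SE p) + S * phi 1 p
          rw [gd_const, gd_const]
          show (0:ℝ) + S * 0 = -(SE p) + S * Efun p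
          rw [SE]
          ring
      | succ j =>
          have hT : gd (phi (j+1)) p (Tv p) = Dt (Dx^[j] Efun) p := rfl
          have hX : gd (phi (j+1)) p (Xv p) = Dx (phi (j+1)) p := rfl
          rw [hT, hX, KL' j p, dx_phi_succ]
    · simp only [if_neg hi]
      have h1 : (sg p).2.2 i (kv + 1) = p.2.2 i (kv + 1) := sg_ne hi p (kv+1)
      have h2 : (Tv (sg p)).2.2 i kv = (Tv p).2.2 i kv := by
        show -(Dx^[kv] (Vr i) (sg p)) = -(Dx^[kv] (Vr i) p)
        rw [sg_eq_upd3, ((ind3_Vr i hi).iter kv) p _]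
      rw [h1, h2]
      rfl
  have hlin : fderiv ℝ F₃ (pr m (sg p)) wT + S * fderiv ℝ F₃ (pr m (sg p)) wX
      = Dt η₃ (sg p) + S * Dx η₃ (sg p) := by
    have hDt3 : Dt η₃ (sg p) = fderiv ℝ F₃ (pr m (sg p)) (pr m (Tv (sg p))) :=
      hrep.gd_eq (sg p) (Tv (sg p))
    have hDx3 : Dx η₃ (sg p) = fderiv ℝ F₃ (pr m (sg p)) (pr m (Xv (sg p))) :=
      hrep.gd_eq (sg p) (Xv (sg p))
    have e1 := congrArg (fderiv ℝ F₃ (pr m (sg p))) hvec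
    rw [map_add, map_smul, map_add, map_smul] at e1
    rw [hDt3, hDx3]
    simpa [smul_eq_mul] using e1
  have hdet := hdet₃ (sg p)
  rw [V2_sg, sg_21] at hdet
  have he1 : η₁ (sg p) = η₁ p := by rw [sg_eq_upd3, ind3_of_12 hη₁ p _]
  have he2 : η₂ (sg p) = η₂ p := by rw [sg_eq_upd3, ind3_of_12 hη₂ p _]
  rw [he1, he2] at hdet
  rw [hDt, hDx]
  rw [hS] at hlin ⊢
  linarith [hlin, hdet]
end Main

section Etah
lemma rep_eta_sg {m : ℕ} {η₃ : Jet → ℝ} {F₃ : JF m → ℝ} (hrep : Rep m η₃ F₃) :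
    ∃ G : JF m → ℝ, Rep m (fun q => η₃ (sg q)) G := by
  have hphi : ∀ κ : Fin (m+1), ∃ F : JF m → ℝ, Rep m (phi κ.1) F := fun κ => by
    obtain ⟨F, hF⟩ := phi_rep κ.1
    exact ⟨_, hF.mono (by omega : κ.1 ≤ m)⟩
  choose phiF hphiF using hphi
  refine ⟨fun y => F₃ (y.1, y.2.1, fun i κ => if i = 2 then phiF κ y else y.2.2 i κ), ?_, ?_⟩
  · refine hrep.1.comp ?_
    refine contDiff_fst.prodMk (ContDiff.prodMk (contDiff_fst.comp contDiff_snd) ?_)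
    refine contDiff_pi.mpr fun i => contDiff_pi.mpr fun κ => ?_
    by_cases hi : i = 2
    · simp only [hi, if_pos rfl]
      exact (hphiF κ).1
    · simp only [if_neg hi]
      exact contDiff_coord i κ
  · intro q
    show η₃ (sg q) = _
    rw [hrep.2 (sg q)]
    congr 1
    refine Prod.ext rfl (Prod.ext rfl ?_)
    funext i κ
    by_cases hi : i = 2
    · subst hi
      show (sg q).2.2 2 κ.1 = if (2:Fin 3) = 2 then phiF κ (pr m q) else (pr m q).2.2 2 κ
      rw [if_pos rfl]
      show (if (2:Fin 3) = 2 then phi κ.1 q else q.2.2 2 κ.1) = _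
      rw [if_pos rfl]
      exact ((hphiF κ).2 q)
    · show (sg q).2.2 i κ.1 = if i = 2 then phiF κ (pr m q) else (pr m q).2.2 i κ
      rw [if_neg hi]
      show (if i = 2 then phi κ.1 q else q.2.2 i κ.1) = q.2.2 i κ.1
      rw [if_neg hi]

lemma ind3_eta_sg {η₃ : Jet → ℝ} : Ind3 (fun q => η₃ (sg q)) := by
  intro p g
  show η₃ (sg (upd3 p g)) = η₃ (sg p)
  rw [sg_upd3]

lemma isdf12_of_rep_ind3 {m : ℕ} {f : Jet → ℝ} {G : JF m → ℝ}
    (h : Rep m f G) (h3 : Ind3 f) : IsDiffFun12 m f := by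
  refine ⟨fun y => G (y.1, y.2.1,
    fun i κ => if hlt : i.1 < 2 then y.2.2 ⟨i.1, hlt⟩ κ else 0), ?_, ?_⟩
  · refine h.1.comp ?_
    refine contDiff_fst.prodMk (ContDiff.prodMk (contDiff_fst.comp contDiff_snd) ?_)
    refine contDiff_pi.mpr fun i => contDiff_pi.mpr fun κ => ?_
    by_cases hlt : i.1 < 2
    · simp only [dif_pos hlt]
      fun_prop
    · simp only [dif_neg hlt]
      exact contDiff_const
  · intro p
    have h0 : f p = f (upd3 p (fun _ => 0)) := (h3 p _).symm
    rw [h0, h.2]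
    congr 1
    refine Prod.ext rfl (Prod.ext rfl ?_)
    funext i κ
    show (if i = 2 then (0:ℝ) else p.2.2 i κ.1)
      = if hlt : i.1 < 2 then p.2.2 (Fin.castLE (by omega) ⟨i.1, hlt⟩) κ.1 else 0
    by_cases hlt : i.1 < 2
    · have hne : i ≠ 2 := by
        intro hh; rw [hh] at hlt; simp at hlt
      rw [if_neg hne, dif_pos hlt]
      congr 1
    · have heq : i = 2 := by
        have := i.isLt; exact Fin.ext (by omega)
      rw [if_pos heq, dif_neg hlt]
end Etah

section Eq3
def Ef' (q : Jet) : ℝ := Real.exp (q.2.2 1 0 - q.2.2 0 0)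

lemma gd_mul {f g : Jet → ℝ} {df dg : ℝ} {p v : Jet}
    (hf : HasDerivAt (fun s : ℝ => f (p + s • v)) df 0)
    (hg : HasDerivAt (fun s : ℝ => g (p + s • v)) dg 0) :
    gd (fun q => f q * g q) p v = df * g p + f p * dg := by
  have h := hf.mul hg
  rw [p_zero_smul] at h
  exact h.deriv

lemma rep_Ef' : Rep 0 Ef' (fun y : JF 0 => Real.exp (y.2.2 1 0 - y.2.2 0 0)) :=
  ⟨by fun_prop, fun p => rfl⟩

lemma rep_C21 : Rep 1 (fun q : Jet => q.2.2 2 1) (fun y : JF 1 => y.2.2 2 1) :=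
  ⟨by fun_prop, fun p => rfl⟩

lemma dt_Ef' (p : Jet) :
    Dt Ef' p = Ef' p * ((-(V 1 p * p.2.2 1 1)) - (-(V 0 p * p.2.2 0 1))) := by
  show gd Ef' p (Tv p) = _
  set A : ℝ := -(V 1 p * p.2.2 1 1)
  set B : ℝ := -(V 0 p * p.2.2 0 1)
  have h1 : HasDerivAt (fun s : ℝ => (p.2.2 1 0 + s • A) - (p.2.2 0 0 + s • B)) (A - B) 0 :=
    (hasDerivAt_line (p.2.2 1 0) A).sub (hasDerivAt_line (p.2.2 0 0) B)
  have h2 := h1.exp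
  have he : (fun s : ℝ => Ef' (p + s • Tv p))
      = fun s : ℝ => Real.exp ((p.2.2 1 0 + s • A) - (p.2.2 0 0 + s • B)) := rfl
  rw [gd, he, h2.deriv]
  simp [Ef']

lemma dx_Ef' (p : Jet) : Dx Ef' p = Ef' p * (p.2.2 1 1 - p.2.2 0 1) := by
  show gd Ef' p (Xv p) = _
  have h1 : HasDerivAt
      (fun s : ℝ => (p.2.2 1 0 + s • p.2.2 1 1) - (p.2.2 0 0 + s • p.2.2 0 1))
      (p.2.2 1 1 - p.2.2 0 1) 0 :=
    (hasDerivAt_line (p.2.2 1 0) (p.2.2 1 1)).sub (hasDerivAt_line (p.2.2 0 0) (p.2.2 0 1))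
  have h2 := h1.exp
  have he : (fun s : ℝ => Ef' (p + s • Xv p))
      = fun s : ℝ => Real.exp ((p.2.2 1 0 + s • p.2.2 1 1) - (p.2.2 0 0 + s • p.2.2 0 1)) := rfl
  rw [gd, he, h2.deriv]
  simp [Ef']

lemma dx_Vr2 (p : Jet) :
    Dx (Vr 2) p = (p.2.2 0 1 + p.2.2 1 1) * p.2.2 2 1
      + (p.2.2 0 0 + p.2.2 1 0) * p.2.2 2 2 := by
  have hVr : Vr 2 = fun q => (q.2.2 0 0 + q.2.2 1 0) * q.2.2 2 1 := by
    funext q; rw [Vr, V2_eq]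
  rw [hVr]
  show gd (fun q => (q.2.2 0 0 + q.2.2 1 0) * q.2.2 2 1) p (Xv p) = _
  have h1 : HasDerivAt
      (fun s : ℝ => (p.2.2 0 0 + s • p.2.2 0 1) + (p.2.2 1 0 + s • p.2.2 1 1))
      (p.2.2 0 1 + p.2.2 1 1) 0 :=
    (hasDerivAt_line (p.2.2 0 0) (p.2.2 0 1)).add (hasDerivAt_line (p.2.2 1 0) (p.2.2 1 1))
  have h2 : HasDerivAt (fun s : ℝ => p.2.2 2 1 + s • p.2.2 2 2) (p.2.2 2 2) 0 :=
    hasDerivAt_line (p.2.2 2 1) (p.2.2 2 2)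
  have h3 := h1.mul h2
  simp only [Pi.mul_def] at h3
  have he : (fun s : ℝ => ((p + s • Xv p).2.2 0 0 + (p + s • Xv p).2.2 1 0)
        * (p + s • Xv p).2.2 2 1)
      = fun s : ℝ => ((p.2.2 0 0 + s • p.2.2 0 1) + (p.2.2 1 0 + s • p.2.2 1 1))
          * (p.2.2 2 1 + s • p.2.2 2 2) := rfl
  rw [gd, he, h3.deriv]
  simp

lemma tv_21 (p : Jet) : (Tv p).2.2 2 1 = -(Dx (Vr 2) p) := by
  show -(Dx^[1] (Vr 2) p) = -(Dx (Vr 2) p)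
  rw [Function.iterate_one]

lemma hee (p : Jet) : Ef' p * Efun p = 1 := by
  rw [Ef', Efun, ← Real.exp_add]
  ring_nf
  exact Real.exp_zero

lemma eq3_lemma {M : ℕ} {η₁ η₂ ηh : Jet → ℝ} {G : JF M → ℝ}
    (hG : Rep M ηh G)
    (heq1 : ∀ p : Jet,
      Dt ηh p + (p.2.2 0 0 + p.2.2 1 0) * Dx ηh p
        + Real.exp (p.2.2 0 0 - p.2.2 1 0) * (η₁ p + η₂ p) = 0)
    (p : Jet) :
    Dt (fun q => Real.exp (q.2.2 1 0 - q.2.2 0 0) * q.2.2 2 1 * ηh q) p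
      + V 2 p * Dx (fun q => Real.exp (q.2.2 1 0 - q.2.2 0 0) * q.2.2 2 1 * ηh q) p
      + p.2.2 2 1 * (η₁ p + η₂ p) = 0 := by
  have rep_w2 : Rep 1 (fun q : Jet => Ef' q * q.2.2 2 1)
      (fun y : JF 1 => Real.exp (y.2.2 1 0 - y.2.2 0 0) * y.2.2 2 1) :=
    ⟨by fun_prop, fun q => rfl⟩
  have gd_c21 : ∀ v : Jet, gd (fun q : Jet => q.2.2 2 1) p v = v.2.2 2 1 := by
    intro v
    have : HasDerivAt (fun s : ℝ => p.2.2 2 1 + s • v.2.2 2 1) (v.2.2 2 1) 0 :=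
      hasDerivAt_line _ _
    exact this.deriv
  -- expansions
  have hDtc : Dt (fun q => Real.exp (q.2.2 1 0 - q.2.2 0 0) * q.2.2 2 1 * ηh q) p
      = (Dt Ef' p * p.2.2 2 1 + Ef' p * (-(Dx (Vr 2) p))) * ηh p
        + (Ef' p * p.2.2 2 1) * Dt ηh p := by
    have hinner : gd (fun q : Jet => Ef' q * q.2.2 2 1) p (Tv p)
        = Dt Ef' p * p.2.2 2 1 + Ef' p * (-(Dx (Vr 2) p)) := by
      have := gd_mul (f := Ef') (g := fun q : Jet => q.2.2 2 1) (rep_Ef'.hasDerivAt_gd p (Tv p)) (rep_C21.hasDerivAt_gd p (Tv p))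
      rw [this, gd_c21 (Tv p), tv_21]
      rfl
    have houter := gd_mul (f := fun q : Jet => Ef' q * q.2.2 2 1) (g := ηh) (rep_w2.hasDerivAt_gd p (Tv p)) (hG.hasDerivAt_gd p (Tv p))
    show gd (fun q => (Ef' q * q.2.2 2 1) * ηh q) p (Tv p) = _
    rw [houter, hinner]
    rfl
  have hDxc : Dx (fun q => Real.exp (q.2.2 1 0 - q.2.2 0 0) * q.2.2 2 1 * ηh q) p
      = (Dx Ef' p * p.2.2 2 1 + Ef' p * p.2.2 2 2) * ηh p
        + (Ef' p * p.2.2 2 1) * Dx ηh p := by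
    have hinner : gd (fun q : Jet => Ef' q * q.2.2 2 1) p (Xv p)
        = Dx Ef' p * p.2.2 2 1 + Ef' p * p.2.2 2 2 := by
      have := gd_mul (f := Ef') (g := fun q : Jet => q.2.2 2 1) (rep_Ef'.hasDerivAt_gd p (Xv p)) (rep_C21.hasDerivAt_gd p (Xv p))
      rw [this, gd_c21 (Xv p)]
      rfl
    have houter := gd_mul (f := fun q : Jet => Ef' q * q.2.2 2 1) (g := ηh) (rep_w2.hasDerivAt_gd p (Xv p)) (hG.hasDerivAt_gd p (Xv p))
    show gd (fun q => (Ef' q * q.2.2 2 1) * ηh q) p (Xv p) = _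
    rw [houter, hinner]
    rfl
  rw [hDtc, hDxc, dt_Ef', dx_Ef', dx_Vr2, V0_eq, V1_eq, V2_eq]
  have h1 := heq1 p
  have h2 := hee p
  simp only [Ef', Efun] at h2 ⊢
  linear_combination (Real.exp (p.2.2 1 0 - p.2.2 0 0) * p.2.2 2 1) * h1
    + (-(p.2.2 2 1 * (η₁ p + η₂ p))) * h2
end Eq3

theorem third_component_normal_form
    (n m : ℕ) (η₁ η₂ η₃ : Jet → ℝ)
    (hη₁ : IsDiffFun12 n η₁) (hη₂ : IsDiffFun12 n η₂) (hη₃ : IsDiffFun m η₃)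
    (hdet₁ : ∀ p : Jet,
      Dt η₁ p + V 0 p * Dx η₁ p + p.2.2 0 1 * (η₁ p + η₂ p) = 0)
    (hdet₂ : ∀ p : Jet,
      Dt η₂ p + V 1 p * Dx η₂ p + p.2.2 1 1 * (η₁ p + η₂ p) = 0)
    (hdet₃ : ∀ p : Jet,
      Dt η₃ p + V 2 p * Dx η₃ p + p.2.2 2 1 * (η₁ p + η₂ p) = 0) :
    ∃ (k : ℕ) (ηh : Jet → ℝ), IsDiffFun12 k ηh ∧
      (∀ p : Jet,
        Dt ηh p + (p.2.2 0 0 + p.2.2 1 0) * Dx ηh p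
          + Real.exp (p.2.2 0 0 - p.2.2 1 0) * (η₁ p + η₂ p) = 0) ∧
      (∀ p : Jet,
        Dt η₁ p + V 0 p * Dx η₁ p + p.2.2 0 1 * (η₁ p + η₂ p) = 0) ∧
      (∀ p : Jet,
        Dt η₂ p + V 1 p * Dx η₂ p + p.2.2 1 1 * (η₁ p + η₂ p) = 0) ∧
      (∀ p : Jet,
        Dt (fun q => Real.exp (q.2.2 1 0 - q.2.2 0 0) * q.2.2 2 1 * ηh q) p
          + V 2 p * Dx (fun q => Real.exp (q.2.2 1 0 - q.2.2 0 0) * q.2.2 2 1 * ηh q) p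
          + p.2.2 2 1 * (η₁ p + η₂ p) = 0) := by
  obtain ⟨F₃, hF₃s, hF₃v⟩ := hη₃
  have hrep : Rep m η₃ F₃ := ⟨hF₃s, fun q => hF₃v q⟩
  obtain ⟨G, hG⟩ := rep_eta_sg hrep
  refine ⟨m, fun q => η₃ (sg q), isdf12_of_rep_ind3 hG ind3_eta_sg, ?_, hdet₁, hdet₂, ?_⟩
  · intro p
    exact main_eq1 hη₁ hη₂ ⟨F₃, hF₃s, hF₃v⟩ hdet₃ p
  · intro p
    exact eq3_lemma hG (fun q => main_eq1 hη₁ hη₂ ⟨F₃, hF₃s, hF₃v⟩ hdet₃ q) p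

end IDFM

end
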